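/- There exists a finite directed graph E (namely one vertex and one loop) and a divisibility sequence n_k = 2^k such that the map ι : M(lim← E^{<n_k}) → lim← M(E^{<n_k}) sending m to the sequence of measures ι(m)_k({τ}) = m(Z(τ,k)) is not surjective: there is a compatible sequence of signed measures (m_k) with m_k({v}) = 2^k unbounded, hence not in the range of ι. -/

import Mathlib

/-- A directed graph: vertices, edges, range and source maps. -/
structure DGraph where
  V : Type
  E : Type
  r : E → V
  s : E → V

namespace DGraph

variable {G : DGraph}

/-- A path in a directed graph: a word of composable edges together with a source vertex
(so that length-zero paths are vertices). -/
structure Path (G : DGraph) where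
  src : G.V
  edges : List G.E
  chain : List.Chain' (fun a b => G.s a = G.r b) edges
  srcEq : ∀ a ∈ edges.getLast?, G.s a = src

/-- The range of a path. -/
def Path.rng (p : G.Path) : G.V := p.edges.head?.elim p.src G.r

/-- The length of a path. -/
def Path.length (p : G.Path) : ℕ := p.edges.length

/-- The length-zero path at a vertex. -/
def Path.nil (G : DGraph) (v : G.V) : G.Path :=
  ⟨v, [], List.isChain_nil, by simp⟩

@[simp] theorem Path.length_nil (v : G.V) : (Path.nil G v).length = 0 := rfl

/-- Prepend an edge to a path. -/
def Path.cons (e : G.E) (p : G.Path) (h : p.rng = G.s e) : G.Path where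
  src := p.src
  edges := e :: p.edges
  chain := by
    simp only [List.Chain']
    rw [List.isChain_cons]
    refine ⟨fun b hb => ?_, p.chain⟩
    rw [← h]
    simp [Path.rng, Option.mem_def.mp hb]
  srcEq := by
    intro a ha
    cases hp : p.edges with
    | nil =>
      rw [hp] at ha
      simp only [List.getLast?_singleton, Option.mem_def, Option.some.injEq] at ha
      subst ha
      have h0 : p.rng = p.src := by simp [Path.rng, hp]
      rw [← h, h0]
    | cons f t =>
      apply p.srcEq
      rw [hp]
      rw [hp, List.getLast?_cons_cons] at ha
      exact ha

@[simp] theorem Path.length_cons (e : G.E) (p : G.Path) (h : p.rng = G.s e) :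
    (Path.cons e p h).length = p.length + 1 := rfl

/-- Remove the first edge of a path. -/
def Path.tail (p : G.Path) : G.Path where
  src := p.src
  edges := p.edges.tail
  chain := p.chain.tail
  srcEq := by
    intro a ha
    apply p.srcEq
    cases hp : p.edges with
    | nil => rw [hp] at ha; simp at ha
    | cons f t =>
      rw [hp] at ha
      simp only [List.tail_cons] at ha
      cases t with
      | nil => simp at ha
      | cons g u => rw [List.getLast?_cons_cons]; exact ha

@[simp] theorem Path.length_tail (p : G.Path) : p.tail.length = p.length - 1 := by
  simp [Path.tail, Path.length]

/-- The initial segment of a path consisting of its first `k` edges. -/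
def Path.take (p : G.Path) (k : ℕ) : G.Path where
  src := (p.edges.drop k).head?.elim p.src G.r
  edges := p.edges.take k
  chain := p.chain.take k
  srcEq := by
    intro a ha
    have hc : List.Chain' (fun a b => G.s a = G.r b) (p.edges.take k ++ p.edges.drop k) := by
      rw [List.take_append_drop]; exact p.chain
    simp only [List.Chain'] at hc
    rw [List.isChain_append] at hc
    obtain ⟨-, -, hadj⟩ := hc
    cases hd : p.edges.drop k with
    | nil =>
      have htake : p.edges.take k = p.edges := by
        have h1 := List.take_append_drop k p.edges
        rw [hd, List.append_nil] at h1
        exact h1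
      simp only [List.head?_nil, Option.elim]
      exact p.srcEq a (htake ▸ ha)
    | cons f t =>
      simp only [List.head?_cons, Option.elim]
      exact hadj a ha f (by rw [hd]; simp)

/-- `[μ]_n` : the initial segment of `μ` of length `|μ| mod n`. -/
def Path.trunc (m : ℕ) (p : G.Path) : G.Path := p.take (p.length % m)

/-- Concatenation of paths, `p` followed after `q` (so `p.append q` has range the range of `p`
and source the source of `q`). -/
def Path.append (p q : G.Path) (h : p.src = q.rng) : G.Path where
  src := q.src
  edges := p.edges ++ q.edges
  chain := by
    simp only [List.Chain']
    rw [List.isChain_append]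
    refine ⟨p.chain, q.chain, fun a ha b hb => ?_⟩
    rw [p.srcEq a ha, h]
    simp [Path.rng, Option.mem_def.mp hb]
  srcEq := by
    intro a ha
    cases hq : q.edges with
    | nil =>
      rw [hq, List.append_nil] at ha
      have h0 : q.rng = q.src := by simp [Path.rng, hq]
      rw [p.srcEq a ha, h, h0]
    | cons f t =>
      apply q.srcEq
      rw [hq]
      rw [hq, List.getLast?_append_cons] at ha
      exact ha

/-- A graph is row-finite if every vertex receives finitely many edges. -/
def RowFinite (G : DGraph) : Prop := ∀ v : G.V, {e : G.E | G.r e = v}.Finite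

/-- A graph has no sources if every vertex receives an edge. -/
def NoSources (G : DGraph) : Prop := ∀ v : G.V, ∃ e : G.E, G.r e = v

/-- A graph is strongly connected if for all vertices `v, w` there is a path from `w` to `v`. -/
def StronglyConnected (G : DGraph) : Prop :=
  ∀ v w : G.V, ∃ p : G.Path, p.src = w ∧ p.rng = v

/-- The set of paths of length less than `n`. -/
abbrev PathLt (G : DGraph) (n : ℕ) := {p : G.Path // p.length < n}

/-- The graph `E(n)` of Kribs and Solel: vertices are paths of length `< n`, and edges
are pairs `(e, μ)` with `r(μ) = s(e)` and `|μ| < n`, with source `μ` and range `[eμ]_n`. -/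
def Eln (G : DGraph) (n : ℕ) : DGraph where
  V := PathLt G n
  E := {q : G.E × G.Path // q.2.length + 1 ≤ n ∧ q.2.rng = G.s q.1}
  s := fun q => ⟨q.1.2, Nat.lt_of_succ_le q.2.1⟩
  r := fun q =>
    if h : q.1.2.length + 1 < n then
      ⟨Path.cons q.1.1 q.1.2 q.2.2, by simpa using h⟩
    else
      ⟨Path.nil G (G.r q.1.1), Nat.lt_of_lt_of_le (Nat.succ_pos _) q.2.1⟩

/-- A vertex of `E`, regarded as a length-zero vertex of `E(n)`. -/
def vtx (G : DGraph) (n : ℕ) (hn : 0 < n) (v : G.V) : PathLt G n :=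
  ⟨Path.nil G v, by simpa using hn⟩

/-- `d` is the greatest common divisor of the set `S` of natural numbers. -/
def IsGCDOf (d : ℕ) (S : Set ℕ) : Prop :=
  (∀ k ∈ S, d ∣ k) ∧ ∀ c : ℕ, (∀ k ∈ S, c ∣ k) → c ∣ d

/-- The set of lengths of (nonempty) cycles of `G`. -/
def CycleLengths (G : DGraph) : Set ℕ :=
  {k | ∃ p : G.Path, p.rng = p.src ∧ p.edges ≠ [] ∧ p.length = k}

/-- The set of lengths of (nonempty) cycles of `G` based at `v`. -/
def CycleLengthsAt (G : DGraph) (v : G.V) : Set ℕ :=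
  {k | ∃ p : G.Path, p.src = v ∧ p.rng = v ∧ p.edges ≠ [] ∧ p.length = k}

/-- The relation `v ∼ w` iff there is a path from `w` to `v` whose length is divisible by `d`. -/
def SimRel (G : DGraph) (d : ℕ) (v w : G.V) : Prop :=
  ∃ p : G.Path, p.src = w ∧ p.rng = v ∧ d ∣ p.length

/-- The connected-component relation of a graph: the smallest equivalence relation
identifying the range and the source of each edge. -/
def Comp (G : DGraph) : G.V → G.V → Prop :=
  Relation.EqvGen (fun a b => ∃ f : G.E, G.r f = a ∧ G.s f = b)

/-- The adjacency matrix of `E(n)` acting on vectors indexed by `E^{<n}`. -/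
noncomputable def Aact (G : DGraph) (n : ℕ) (g : PathLt G n → ℝ) (v : PathLt G n) : ℝ :=
  ∑ᶠ (f : (Eln G n).E) (_ : (Eln G n).r f = v), g ((Eln G n).s f)

/-- The pushforward of a vector on `E^{<n}` along `ν ↦ [ν]_m`. -/
noncomputable def pushf (G : DGraph) (n m : ℕ) (g : PathLt G n → ℝ) (μ : PathLt G m) : ℝ :=
  ∑ᶠ (ν : PathLt G n) (_ : Path.trunc m ν.1 = μ.1), g ν

instance : TopologicalSpace G.Path := ⊥

/-- The inverse limit `lim← E^{<n_k}` along the truncation maps. -/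
def InvLim (G : DGraph) (n : ℕ → ℕ) : Type :=
  {f : (k : ℕ) → PathLt G (n k) // ∀ k, Path.trunc (n k) (f (k+1)).1 = (f k).1}

instance (G : DGraph) (n : ℕ → ℕ) : TopologicalSpace (InvLim G n) :=
  inferInstanceAs (TopologicalSpace
    {f : (k : ℕ) → PathLt G (n k) // ∀ k, Path.trunc (n k) (f (k+1)).1 = (f k).1})

noncomputable instance (G : DGraph) (n : ℕ → ℕ) : MeasurableSpace (InvLim G n) := borel _

end DGraph

/-! On the graph with one vertex `v` and one loop `e`, put `m_0({v}) = 1` and, for `j < 2^k`,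
`m_{k+1}({e^j}) = 2 m_k({e^j})`, `m_{k+1}({e^{j+2^k}}) = -m_k({e^j})`. The family is compatible
because the fibre of truncation `[·]_{2^k}` over `e^j` is `{e^j, e^{j+2^k}}` and `2 m - m = m`.
Its value `m_k({v}) = 2^k` is unbounded in `k`, whereas `m(Z(v,k))` is bounded by the total
variation of `m`. -/

theorem MeasureTheory.SignedMeasure.apply_le_totalVariation_univ {X : Type*}
    [MeasurableSpace X] (m : SignedMeasure X) (s : Set X) :
    m s ≤ m.totalVariation.real Set.univ :=
  calc m s ≤ ‖m s‖ := Real.le_norm_self _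
    _ ≤ m.totalVariation.real s := m.norm_le_totalVariation s
    _ ≤ m.totalVariation.real Set.univ := measureReal_mono (Set.subset_univ s)

theorem Nat.mod_eq_iff_of_lt_two_mul {i j n : ℕ} (hj : j < n) (hi : i < 2 * n) :
    i % n = j ↔ i = j ∨ i = j + n := by
  rcases lt_or_ge i n with hin | hin
  · rw [Nat.mod_eq_of_lt hin]
    omega
  · rw [Nat.mod_eq_sub_mod hin, Nat.mod_eq_of_lt (by omega)]
    omega

namespace DGraph

variable {G : DGraph}

theorem Path.length_trunc (m : ℕ) (p : G.Path) : (p.trunc m).length = p.length % m := by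
  simp only [trunc, take, length, List.length_take]
  exact min_eq_left (Nat.mod_le _ _)

theorem Path.ext_of_length [Subsingleton G.V] [Subsingleton G.E] {p q : G.Path}
    (h : p.length = q.length) : p = q := by
  obtain ⟨v, es, _, _⟩ := p
  obtain ⟨w, fs, _, _⟩ := q
  obtain rfl : es = fs := List.ext_getElem h fun _ _ _ => Subsingleton.elim _ _
  obtain rfl : v = w := Subsingleton.elim _ _
  rfl

def oneLoop : DGraph where
  V := Unit
  E := Unit
  r := fun _ => ()
  s := fun _ => ()

instance : Subsingleton oneLoop.V := inferInstanceAs (Subsingleton Unit)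

instance : Subsingleton oneLoop.E := inferInstanceAs (Subsingleton Unit)

namespace oneLoop

/-- The path `e^j`, as a vertex of `E(n)`. -/
def pathLt (n j : ℕ) (h : j < n) : PathLt oneLoop n :=
  ⟨⟨(), List.replicate j (), List.isChain_replicate_of_rel _ rfl, fun _ _ => rfl⟩,
    List.length_replicate.trans_lt h⟩

@[simp] theorem length_pathLt (n j : ℕ) (h : j < n) : (pathLt n j h).1.length = j :=
  List.length_replicate

theorem eq_pathLt_iff {n j : ℕ} {h : j < n} {ν : PathLt oneLoop n} :
    ν = pathLt n j h ↔ ν.1.length = j :=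
  ⟨fun hν => hν ▸ length_pathLt n j h,
    fun hν => Subtype.ext (Path.ext_of_length (by rw [hν, length_pathLt]))⟩

theorem trunc_fiber_eq {n : ℕ} (τ : PathLt oneLoop n) :
    {ν : PathLt oneLoop (2 * n) | ν.1.trunc n = τ.1} =
      {pathLt (2 * n) τ.1.length (by omega), pathLt (2 * n) (τ.1.length + n) (by omega)} := by
  ext ν
  rw [Set.mem_ofPred_eq, Set.mem_insert_iff, Set.mem_singleton_iff, eq_pathLt_iff, eq_pathLt_iff,
    ← Nat.mod_eq_iff_of_lt_two_mul τ.2 ν.2, ← Path.length_trunc]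
  exact ⟨fun h => h ▸ rfl, fun h => Path.ext_of_length h⟩

theorem finsum_trunc_eq {n N : ℕ} (hN : N = 2 * n) (τ : PathLt oneLoop n) (f : ℕ → ℝ) :
    ∑ᶠ (ν : PathLt oneLoop N) (_ : ν.1.trunc n = τ.1), f ν.1.length =
      f τ.1.length + f (τ.1.length + n) := by
  subst hN
  have hne : pathLt (2 * n) τ.1.length (by omega) ≠ pathLt (2 * n) (τ.1.length + n) (by omega) := by
    rw [Ne, eq_pathLt_iff, length_pathLt]
    omega
  have := finsum_mem_pair (f := fun ν : PathLt oneLoop (2 * n) => f ν.1.length) hne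
  rw [← trunc_fiber_eq] at this
  simpa using this

/-- `weight k j` is the value `m_k({e^j})`. -/
noncomputable def weight : ℕ → ℕ → ℝ
  | 0, _ => 1
  | k + 1, j => if j < 2 ^ k then 2 * weight k j else -weight k (j - 2 ^ k)

theorem weight_zero_right (k : ℕ) : weight k 0 = 2 ^ k := by
  induction k with
  | zero => rfl
  | succ k ih => simp [weight, ih, pow_succ, mul_comm]

theorem weight_succ_add_weight_succ_add_pow {k j : ℕ} (hj : j < 2 ^ k) :
    weight (k + 1) j + weight (k + 1) (j + 2 ^ k) = weight k j := by
  simp only [weight, hj, ↓reduceIte, add_lt_iff_neg_right, not_lt_zero, add_tsub_cancel_right]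
  ring

end oneLoop

end DGraph

open DGraph MeasureTheory in
/-- For the graph with one vertex and one loop and the divisibility
sequence `n_k = 2^k`, the map `ι` of the previous statement is not surjective: there is a
compatible sequence of signed measures `(m_k)` with `m_k({v}) = 2^k` unbounded, hence not of
the form `k ↦ (τ ↦ m(Z(τ,k)))` for any finite signed measure `m` on the inverse limit. -/
theorem iota_not_surjective :
    ∃ (G : DGraph) (_ : G.V) (_ : G.E) (g : (k : ℕ) → (PathLt G (2^k) → ℝ)),
      Subsingleton G.V ∧ Subsingleton G.E ∧
      (∀ k (τ : PathLt G (2^k)),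
        ∑ᶠ (ν : PathLt G (2^(k+1))) (_ : Path.trunc (2^k) ν.1 = τ.1), g (k+1) ν = g k τ) ∧
      (∀ k (v : G.V), g k (vtx G (2^k) (Nat.pow_pos (by norm_num)) v) = 2^k) ∧
      ¬ ∃ m : SignedMeasure (InvLim G (fun k => 2^k)),
          ∀ k (τ : PathLt G (2^k)),
            m {f : InvLim G (fun k => 2^k) | f.1 k = τ} = g k τ := by
  have vertex_weight (k : ℕ) (v : oneLoop.V) :
      oneLoop.weight k (vtx oneLoop (2 ^ k) (Nat.pow_pos (by norm_num)) v).1.length = 2 ^ k :=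
    oneLoop.weight_zero_right k
  refine ⟨oneLoop, (), (), fun k τ => oneLoop.weight k τ.1.length, inferInstance, inferInstance,
    fun k τ => ?_, vertex_weight, ?_⟩
  · exact (oneLoop.finsum_trunc_eq (pow_succ' 2 k) τ _).trans
      (oneLoop.weight_succ_add_weight_succ_add_pow τ.2)
  · rintro ⟨m, hm⟩
    obtain ⟨k, hk⟩ := pow_unbounded_of_one_lt (m.totalVariation.real Set.univ) one_lt_two
    have hvertex : (2 : ℝ) ^ k ≤ m.totalVariation.real Set.univ :=
      calc (2 : ℝ) ^ k = m {f | f.1 k = vtx oneLoop (2 ^ k) (Nat.pow_pos two_pos) ()} :=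
            ((hm k _).trans (vertex_weight k ())).symm
        _ ≤ m.totalVariation.real Set.univ := m.apply_le_totalVariation_univ _
    exact hk.not_ge hvertex
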